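/- arXiv:1409.3936 — 8 statements merged into one kernel-verified Lean document; each statement's English description precedes it below -/
import Mathlib

section
/- Let σ : ℝ → ℝ be Lipschitz continuous with σ(x) ≠ 0 for every x ∈ ℝ, and fix a ∈ ℝ. Then H(x) = ∫_a^x dt/σ(t) is a bijection from ℝ onto ℝ. -/
/-!
A continuous nonvanishing `σ` has constant sign, and replacing `σ` by `-σ` negates `H`, so we
may assume `σ > 0`. Then `H` is a continuous, strictly increasing primitive of `1 / σ`.
Lipschitz continuity gives linear growth `σ t ≤ σ a + K (t - a)` for `t ≥ a`, so `H x`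
dominates `K⁻¹ log ((σ a + K (x - a)) / σ a) → ∞`; the end at `-∞` reduces to this one
through `t ↦ -t`.
-/

open MeasureTheory Filter intervalIntegral Set

lemma integral_inv_mul_add {K d a x : ℝ} (hK : 0 < K) (ha : 0 < K * a + d)
    (hx : 0 < K * x + d) :
    ∫ t in a..x, (K * t + d)⁻¹ = K⁻¹ * Real.log ((K * x + d) / (K * a + d)) := by
  rw [integral_comp_mul_add (fun s => s⁻¹) hK.ne', integral_inv_of_pos ha hx, smul_eq_mul]

lemma strictMono_integral_of_pos {f : ℝ → ℝ} (hf : Continuous f) (hpos : ∀ t, 0 < f t)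
    (a : ℝ) :
    StrictMono (fun x => ∫ t in a..x, f t) :=
  strictMono_of_deriv_pos fun x => (hf.deriv_integral f a x).symm ▸ hpos x

lemma LipschitzWith.le_add_mul_sub {σ : ℝ → ℝ} {L : NNReal} (hσ : LipschitzWith L σ) {a t : ℝ}
    (hat : a ≤ t) : σ t ≤ σ a + L * (t - a) := by
  have h := hσ.dist_le_mul t a
  rw [Real.dist_eq, Real.dist_eq, abs_of_nonneg (sub_nonneg.2 hat)] at h
  linarith [le_abs_self (σ t - σ a)]

lemma tendsto_integral_one_div_atTop {σ : ℝ → ℝ} {L : NNReal} (hσ : LipschitzWith L σ)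
    (hpos : ∀ t, 0 < σ t) (a : ℝ) :
    Tendsto (fun x => ∫ t in a..x, 1 / σ t) atTop atTop := by
  -- slope `L + 1` rather than `L`: the logarithmic bound needs a positive slope, also if `L = 0`
  set K : ℝ := L + 1
  set d := σ a - K * a
  have hK : 0 < K := by positivity
  have hKa : K * a + d = σ a := by ring
  have hbound : ∀ t, a ≤ t → σ t ≤ K * t + d := fun t hat => by
    have := hσ.le_add_mul_sub hat
    nlinarith
  have hlower : ∀ x, a ≤ x → K⁻¹ * Real.log ((K * x + d) / σ a) ≤ ∫ t in a..x, 1 / σ t := by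
    intro x hax
    have haff_pos : ∀ t, a ≤ t → 0 < K * t + d := fun t hat =>
      (hpos t).trans_le (hbound t hat)
    have haff_int : IntervalIntegrable (fun t => (K * t + d)⁻¹) volume a x :=
      ContinuousOn.intervalIntegrable <|
        (by fun_prop : Continuous fun t => K * t + d).continuousOn.inv₀
          fun t ht => (haff_pos t (uIcc_of_le hax ▸ ht).1).ne'
    have hσ_int : IntervalIntegrable (fun t => 1 / σ t) volume a x :=
      (continuous_const.div hσ.continuous fun t => (hpos t).ne').intervalIntegrable a x
    rw [← hKa, ← integral_inv_mul_add hK (hKa ▸ hpos a) (haff_pos x hax)]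
    exact integral_mono_on hax haff_int hσ_int fun t ht =>
      one_div (σ t) ▸ inv_anti₀ (hpos t) (hbound t ht.1)
  refine tendsto_atTop_mono' _ (eventually_atTop.2 ⟨a, hlower⟩) ?_
  refine (Real.tendsto_log_atTop.comp ?_).const_mul_atTop (inv_pos.2 hK)
  exact ((tendsto_atTop_add_const_right _ d (tendsto_id.const_mul_atTop hK)).atTop_div_const
    (hpos a))

lemma tendsto_integral_one_div_atBot {σ : ℝ → ℝ} {L : NNReal} (hσ : LipschitzWith L σ)
    (hpos : ∀ t, 0 < σ t) (a : ℝ) :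
    Tendsto (fun x => ∫ t in a..x, 1 / σ t) atBot atBot := by
  have hreflect : (fun x => ∫ t in a..x, 1 / σ t) = fun x => -∫ t in -a..-x, 1 / σ (-t) := by
    funext x
    rw [integral_comp_neg (fun t => 1 / σ t), neg_neg, neg_neg, integral_symm]
  rw [hreflect]
  exact tendsto_neg_atTop_atBot.comp <|
    (tendsto_integral_one_div_atTop (hσ.comp LipschitzWith.id.neg) (fun t => hpos (-t)) (-a)).comp
      tendsto_neg_atBot_atTop

lemma bijective_integral_one_div_of_pos {σ : ℝ → ℝ} {L : NNReal} (hσ : LipschitzWith L σ)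
    (hpos : ∀ t, 0 < σ t) (a : ℝ) :
    Function.Bijective (fun x => ∫ t in a..x, 1 / σ t) := by
  have hf : Continuous fun t => 1 / σ t := continuous_const.div hσ.continuous fun t => (hpos t).ne'
  exact ⟨(strictMono_integral_of_pos hf (fun t => one_div_pos.2 (hpos t)) a).injective,
    (continuous_primitive (fun u v => hf.intervalIntegrable u v) a).surjective
      (tendsto_integral_one_div_atTop hσ hpos a) (tendsto_integral_one_div_atBot hσ hpos a)⟩

/-- For σ Lipschitz and nonvanishing, H(x) = ∫_a^x dt/σ(t) is a
bijection from ℝ onto ℝ. -/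
theorem fokker_planck_H_bijective
    (σ : ℝ → ℝ) (L : NNReal) (hσ : LipschitzWith L σ)
    (hne : ∀ x : ℝ, σ x ≠ 0) (a : ℝ) :
    Function.Bijective (fun x => ∫ t in a..x, 1 / σ t) := by
  rcases isPreconnected_univ.mapsTo_Ioi_or_Iio hσ.continuous.continuousOn (fun x _ => hne x)
    with hpos | hneg
  · exact bijective_integral_one_div_of_pos hσ (fun t => hpos (mem_univ t)) a
  · have hneg_pos : ∀ t, 0 < -σ t := fun t => neg_pos.2 (hneg (mem_univ t))
    have hflip : (fun x => ∫ t in a..x, 1 / σ t) = fun x => -∫ t in a..x, 1 / -σ t := by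
      funext x
      simp only [one_div, inv_neg, intervalIntegral.integral_neg, neg_neg]
    rw [hflip]
    exact neg_involutive.bijective.comp (bijective_integral_one_div_of_pos hσ.neg hneg_pos a)
end

section
/- Let σ : ℝ → ℝ be Lipschitz continuous with σ(x) ≠ 0 for every x ∈ ℝ, fix a ∈ ℝ, define H(x) = ∫_a^x dt/σ(t), and let H⁻¹ denote its inverse. Then for every r, x ∈ ℝ, the function z ↦ H⁻¹(H(x) + r·z) is the unique solution on [0, 1] of the initial value problem y′(z) = r·σ(y(z)), y(0) = x; consequently the Marcus jump map satisfies ξ(r, x) = H⁻¹(H(x) + r). -/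
/-!
Since `1 / σ` is continuous, `H` is differentiable with `H' = 1 / σ`, and a continuous
bijection of `ℝ` is a homeomorphism, so the inverse function theorem gives
`(H⁻¹)' = σ ∘ H⁻¹`. By the chain rule `z ↦ H⁻¹(H x + r z)` then solves `y' = r σ(y)`,
and since `r σ` is Lipschitz, Grönwall's uniqueness theorem identifies every solution
with it.
-/

open MeasureTheory Set

theorem Continuous.continuous_of_leftInverse_of_rightInverse {α β : Type*}
    [ConditionallyCompleteLinearOrder α] [DenselyOrdered α] [TopologicalSpace α]
    [OrderTopology α] [LinearOrder β] [TopologicalSpace β] [OrderTopology β]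
    {f : α → β} {g : β → α} (hf : Continuous f) (hl : Function.LeftInverse g f)
    (hr : Function.RightInverse g f) : Continuous g := by
  rcases hf.strictMono_of_inj hl.injective with hmono | hanti
  · exact (hmono.orderIsoOfRightInverse f g hr).symm.continuous
  · have hmono : StrictMono (OrderDual.toDual ∘ f) := hanti
    exact (hmono.orderIsoOfRightInverse _ (g ∘ OrderDual.ofDual) hr).symm.continuous.comp
      continuous_toDual

theorem hasDerivAt_inverse_of_hasDerivAt_one_div {σ H G : ℝ → ℝ} (hne : ∀ x, σ x ≠ 0)
    (hH : ∀ x, HasDerivAt H (1 / σ x) x) (hl : Function.LeftInverse G H)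
    (hr : Function.RightInverse G H) (y : ℝ) : HasDerivAt G (σ (G y)) y := by
  have hG : Continuous G := Continuous.continuous_of_leftInverse_of_rightInverse
    (continuous_iff_continuousAt.2 fun x => (hH x).continuousAt) hl hr
  simpa only [one_div, inv_inv] using HasDerivAt.of_local_left_inverse hG.continuousAt
    (hH (G y)) (one_div_ne_zero (hne _)) (Filter.Eventually.of_forall hr)

theorem HasDerivAt.comp_const_add_mul {E : Type*} [NormedAddCommGroup E] [NormedSpace ℝ E]
    {v : E → E} {G : ℝ → E} (hG : ∀ y, HasDerivAt G (v (G y)) y) (c r z : ℝ) :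
    HasDerivAt (fun w => G (c + r * w)) (r • v (G (c + r * z))) z := by
  have hin : HasDerivAt (fun w : ℝ => c + r * w) r z := by
    simpa using ((hasDerivAt_id z).const_mul r).const_add c
  exact (hG (c + r * z)).scomp z hin

theorem ODE_solution_unique_of_hasDerivAt {E : Type*} [NormedAddCommGroup E]
    [NormedSpace ℝ E] {v : E → E} {K : NNReal} (hv : LipschitzWith K v) {f g : ℝ → E}
    {a b : ℝ} (hf : ∀ t ∈ Icc a b, HasDerivAt f (v (f t)) t)
    (hg : ∀ t ∈ Icc a b, HasDerivAt g (v (g t)) t) (ha : f a = g a) :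
    EqOn f g (Icc a b) :=
  ODE_solution_unique (v := fun _ => v) (fun _ => hv)
    (fun t ht => (hf t ht).continuousAt.continuousWithinAt)
    (fun t ht => (hf t (Ico_subset_Icc_self ht)).hasDerivWithinAt)
    (fun t ht => (hg t ht).continuousAt.continuousWithinAt)
    (fun t ht => (hg t (Ico_subset_Icc_self ht)).hasDerivWithinAt) ha

/-- With H(x) = ∫_a^x dt/σ(t) and H⁻¹ its inverse, the function
z ↦ H⁻¹(H(x) + r·z) is the unique solution on [0,1] of y′ = r·σ(y), y(0) = x;
consequently the Marcus jump map (the value at z = 1 of any solution) equals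
H⁻¹(H(x) + r). -/
theorem fokker_planck_marcus_jump_map_formula
    (σ : ℝ → ℝ) (L : NNReal) (hσ : LipschitzWith L σ)
    (hne : ∀ x : ℝ, σ x ≠ 0) (a : ℝ)
    (H : ℝ → ℝ) (hH : H = fun x => ∫ t in a..x, 1 / σ t)
    (Hinv : ℝ → ℝ)
    (hleft : Function.LeftInverse Hinv H)
    (hright : Function.RightInverse Hinv H) :
    ∀ r x : ℝ,
      (∀ z ∈ Icc (0:ℝ) 1,
        HasDerivAt (fun w => Hinv (H x + r * w)) (r * σ (Hinv (H x + r * z))) z) ∧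
      Hinv (H x + r * 0) = x ∧
      (∀ u : ℝ → ℝ, u 0 = x →
        (∀ z ∈ Icc (0:ℝ) 1, HasDerivAt u (r * σ (u z)) z) →
        ∀ z ∈ Icc (0:ℝ) 1, u z = Hinv (H x + r * z)) ∧
      (∀ u : ℝ → ℝ, u 0 = x →
        (∀ z ∈ Icc (0:ℝ) 1, HasDerivAt u (r * σ (u z)) z) →
        u 1 = Hinv (H x + r)) := by
  intro r x
  have hH' : ∀ y, HasDerivAt H (1 / σ y) y := fun y => hH ▸
    ((continuous_const.div hσ.continuous hne).integral_hasStrictDerivAt a y).hasDerivAt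
  have hsol : ∀ z, HasDerivAt (fun w => Hinv (H x + r * w)) (r * σ (Hinv (H x + r * z))) z :=
    HasDerivAt.comp_const_add_mul (hasDerivAt_inverse_of_hasDerivAt_one_div hne hH' hleft hright)
      (H x) r
  have hinit : Hinv (H x + r * 0) = x := by simpa using hleft x
  have huniq : ∀ u : ℝ → ℝ, u 0 = x → (∀ z ∈ Icc (0:ℝ) 1, HasDerivAt u (r * σ (u z)) z) →
      ∀ z ∈ Icc (0:ℝ) 1, u z = Hinv (H x + r * z) := fun u hu0 hu' =>
    ODE_solution_unique_of_hasDerivAt ((lipschitzWith_smul r).comp hσ) hu'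
      (fun z _ => hsol z) (hu0.trans hinit.symm)
  refine ⟨fun z _ => hsol z, hinit, huniq, fun u hu0 hu' => ?_⟩
  simpa using huniq u hu0 hu' 1 (right_mem_Icc.2 zero_le_one)
end

section
/- Let σ : ℝ → ℝ be Lipschitz continuous with σ(x) ≠ 0 for every x ∈ ℝ, fix a ∈ ℝ, define H(x) = ∫_a^x dt/σ(t), let H⁻¹ denote its inverse, and for y ∈ ℝ set G_y(x) = H⁻¹(H(x) + y). Then for every y ∈ ℝ: (i) G_y is differentiable on ℝ with G_y′(x) = σ(G_y(x))/σ(x) for all x; and (ii) G_{−y} is the inverse of G_y, i.e., G_{−y}(G_y(x)) = x and G_y(G_{−y}(x)) = x for all x ∈ ℝ. -/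
open MeasureTheory

lemma fp_aux_cont_inv (H Hinv : ℝ → ℝ) (hc : Continuous H)
    (hleft : Function.LeftInverse Hinv H)
    (hright : Function.RightInverse Hinv H) : Continuous Hinv := by
  have hinj : Function.Injective H := hleft.injective
  have hsurj : Function.Surjective H := hright.surjective
  rcases hc.strictMono_of_inj hinj with hm | ha
  · let e := StrictMono.orderIsoOfSurjective H hm hsurj
    have : Hinv = ⇑e.symm := by
      funext z
      apply hinj
      rw [hright z]
      exact (e.apply_symm_apply z).symm
    rw [this]
    exact OrderIso.continuous e.symm
  · have hm : StrictMono (fun x => -H x) := fun x y hxy => neg_lt_neg (ha hxy)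
    have hsurj' : Function.Surjective (fun x => -H x) := by
      intro z
      obtain ⟨w, hw⟩ := hsurj (-z)
      exact ⟨w, by simp [hw]⟩
    let e := StrictMono.orderIsoOfSurjective _ hm hsurj'
    have : Hinv = fun z => e.symm (-z) := by
      funext z
      apply hinj
      rw [hright z]
      have : (fun x => -H x) (e.symm (-z)) = -z := e.apply_symm_apply (-z)
      simpa [neg_eq_iff_eq_neg] using this.symm
    rw [this]
    exact (OrderIso.continuous e.symm).comp continuous_neg

/-- With H(x) = ∫_a^x dt/σ(t), H⁻¹ its inverse and
G_y(x) = H⁻¹(H(x) + y): (i) G_y is differentiable with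
G_y′(x) = σ(G_y(x))/σ(x); (ii) G_{−y} is the two-sided inverse of G_y. -/
theorem fokker_planck_G_deriv_and_inverse
    (σ : ℝ → ℝ) (L : NNReal) (hσ : LipschitzWith L σ)
    (hne : ∀ x : ℝ, σ x ≠ 0) (a : ℝ)
    (H : ℝ → ℝ) (hH : H = fun x => ∫ t in a..x, 1 / σ t)
    (Hinv : ℝ → ℝ)
    (hleft : Function.LeftInverse Hinv H)
    (hright : Function.RightInverse Hinv H)
    (G : ℝ → ℝ → ℝ) (hG : ∀ y x : ℝ, G y x = Hinv (H x + y)) :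
    ∀ y : ℝ,
      (∀ x : ℝ, HasDerivAt (G y) (σ (G y x) / σ x) x) ∧
      (∀ x : ℝ, G (-y) (G y x) = x) ∧
      (∀ x : ℝ, G y (G (-y) x) = x) := by
  have hσc : Continuous σ := hσ.continuous
  have hcont : Continuous fun t => 1 / σ t := continuous_const.div hσc hne
  have hHd : ∀ x : ℝ, HasDerivAt H (1 / σ x) x := by
    intro x
    rw [hH]
    exact (hcont.integral_hasStrictDerivAt a x).hasDerivAt
  have hHc : Continuous H := by
    apply continuous_iff_continuousAt.2
    intro x
    exact (hHd x).continuousAt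
  have hHinvC : Continuous Hinv := fp_aux_cont_inv H Hinv hHc hleft hright
  intro y
  refine ⟨?_, ?_, ?_⟩
  · intro x
    -- derivative of Hinv at H x + y
    have hHinvD : HasDerivAt Hinv (σ (Hinv (H x + y))) (H x + y) := by
      have := HasDerivAt.of_local_left_inverse (f := H) (g := Hinv)
        (f' := 1 / σ (Hinv (H x + y))) (a := H x + y)
        (hHinvC.continuousAt) (hHd _) (by
          simpa using (hne (Hinv (H x + y))))
        (Filter.Eventually.of_forall hright)
      simpa using this
    have hinner : HasDerivAt (fun z => H z + y) (1 / σ x) x := (hHd x).add_const y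
    have := hHinvD.comp x hinner
    have heq : (fun z => Hinv (H z + y)) = G y := by
      funext z; rw [hG]
    rw [Function.comp_def, heq] at this
    have : HasDerivAt (G y) (σ (Hinv (H x + y)) * (1 / σ x)) x := this
    rw [← hG y x] at this
    simpa [div_eq_mul_inv, mul_comm] using this
  · intro x
    rw [hG, hG, hright, add_neg_cancel_right, hleft]
  · intro x
    rw [hG, hG, hright, neg_add_cancel_right, hleft]
end

section
/- Let σ : ℝ → ℝ be Lipschitz continuous, twice continuously differentiable, with σ(x) ≠ 0 for every x ∈ ℝ; fix a ∈ ℝ, define H(x) = ∫_a^x dt/σ(t) with inverse H⁻¹, and for y ∈ ℝ set G_y(x) = H⁻¹(H(x) + y). Let φ : ℝ → ℝ be smooth with compact support. Then there exists a constant C ≥ 0 such that for all x ∈ ℝ and all y with |y| ≤ 1, |φ(G_y(x)) − φ(x) − y·φ′(x)·σ(x)| ≤ C·y². -/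
open MeasureTheory

/-- Auxiliary second-order Taylor bound via two applications of the mean value inequality. -/
lemma taylor_bound_aux {f f' f'' : ℝ → ℝ} {C : ℝ}
    (hf : ∀ t, HasDerivAt f (f' t) t)
    (hf' : ∀ t, HasDerivAt f' (f'' t) t)
    (hC : ∀ t, |f'' t| ≤ C) (y : ℝ) :
    |f y - f 0 - y * f' 0| ≤ C * y ^ 2 := by
  have hC0 : 0 ≤ C := le_trans (abs_nonneg _) (hC 0)
  have key : ∀ t ∈ Set.uIcc 0 y, ‖f' t - f' 0‖ ≤ C * |y| := by
    intro t ht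
    have h1 : ‖f' t - f' 0‖ ≤ C * ‖t - 0‖ :=
      (convex_uIcc 0 y).norm_image_sub_le_of_norm_hasDerivWithin_le
        (fun u _ => (hf' u).hasDerivWithinAt)
        (fun u _ => by simpa [Real.norm_eq_abs] using hC u)
        Set.left_mem_uIcc ht
    have h2 : |t| ≤ |y| := by
      rcases Set.mem_uIcc.mp ht with ⟨ha, hb⟩ | ⟨ha, hb⟩
      · rw [abs_of_nonneg ha, abs_of_nonneg (ha.trans hb)]; exact hb
      · rw [abs_of_nonpos hb, abs_of_nonpos (ha.trans hb)]; linarith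
    calc ‖f' t - f' 0‖ ≤ C * ‖t - 0‖ := h1
      _ = C * |t| := by rw [sub_zero, Real.norm_eq_abs]
      _ ≤ C * |y| := mul_le_mul_of_nonneg_left h2 hC0
  have h3 : ‖(f y - f 0 - y * f' 0) - (f 0 - f 0 - 0 * f' 0)‖ ≤ (C * |y|) * ‖y - 0‖ :=
    (convex_uIcc 0 y).norm_image_sub_le_of_norm_hasDerivWithin_le
      (f := fun t => f t - f 0 - t * f' 0) (f' := fun t => f' t - f' 0)
      (fun t _ =>
        (((hf t).sub_const (f 0)).sub (hasDerivAt_mul_const (f' 0))).hasDerivWithinAt)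
      key Set.left_mem_uIcc Set.right_mem_uIcc
  have h4 : f 0 - f 0 - 0 * f' 0 = 0 := by ring
  rw [h4, sub_zero] at h3
  have h5 : (C * |y|) * ‖y - 0‖ = C * y ^ 2 := by
    rw [sub_zero, Real.norm_eq_abs, mul_assoc, abs_mul_abs_self, ← pow_two]
  rw [h5] at h3
  simpa [Real.norm_eq_abs] using h3

/-- Second-order Taylor bound in y for the Marcus jump transform:
|φ(G_y(x)) − φ(x) − y·φ′(x)·σ(x)| ≤ C·y² uniformly in x and |y| ≤ 1. -/
theorem fokker_planck_taylor_bound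
    (σ : ℝ → ℝ) (L : NNReal) (hσ : LipschitzWith L σ)
    (hσC2 : ContDiff ℝ 2 σ)
    (hne : ∀ x : ℝ, σ x ≠ 0) (a : ℝ)
    (H : ℝ → ℝ) (hH : H = fun x => ∫ t in a..x, 1 / σ t)
    (Hinv : ℝ → ℝ)
    (hleft : Function.LeftInverse Hinv H)
    (hright : Function.RightInverse Hinv H)
    (G : ℝ → ℝ → ℝ) (hG : ∀ y x : ℝ, G y x = Hinv (H x + y))
    (φ : ℝ → ℝ) (hφ : ContDiff ℝ (⊤ : ℕ∞) φ) (hφsupp : HasCompactSupport φ) :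
    ∃ C : ℝ, 0 ≤ C ∧ ∀ x y : ℝ, |y| ≤ 1 →
      |φ (G y x) - φ x - y * deriv φ x * σ x| ≤ C * y ^ 2 := by
  classical
  have hσc : Continuous σ := hσ.continuous
  have hinvc : Continuous fun t => 1 / σ t := continuous_const.div hσc hne
  have hHd : ∀ x : ℝ, HasDerivAt H (1 / σ x) x := by
    intro x; rw [hH]; exact (hinvc.integral_hasStrictDerivAt a x).hasDerivAt
  -- σ has constant sign
  have hsign : (∀ x, 0 < σ x) ∨ (∀ x, σ x < 0) := by
    by_contra h
    push_neg at h
    obtain ⟨⟨u, hu⟩, ⟨v, hv⟩⟩ := h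
    have h0 : (0 : ℝ) ∈ Set.uIcc (σ u) (σ v) := Set.mem_uIcc.2 (Or.inl ⟨hu, hv⟩)
    obtain ⟨w, _, hw⟩ := intermediate_value_uIcc hσc.continuousOn h0
    exact hne w hw
  -- continuity of the inverse
  have hHinv_surj : Function.Surjective Hinv := hleft.surjective
  have hHinvCont : Continuous Hinv := by
    rcases hsign with hpos | hneg
    · have hmono : StrictMono H := strictMono_of_deriv_pos fun x => by
        rw [(hHd x).deriv]; exact one_div_pos.mpr (hpos x)
      have hm : Monotone Hinv := fun u v huv =>
        hmono.le_iff_le.mp (by rw [hright u, hright v]; exact huv)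
      exact hm.continuous_of_surjective hHinv_surj
    · have hanti : StrictAnti H := strictAnti_of_deriv_neg fun x => by
        rw [(hHd x).deriv]; exact one_div_neg.mpr (hneg x)
      have hm : Monotone fun p => Hinv (-p) := fun u v huv =>
        hanti.le_iff_ge.mp (by rw [hright (-u), hright (-v)]; linarith)
      have hs : Function.Surjective fun p => Hinv (-p) := fun b =>
        ⟨-(H b), by simp [hleft b]⟩
      have hc := (hm.continuous_of_surjective hs).comp continuous_neg
      have he : Hinv = (fun p => Hinv (-p)) ∘ fun a => -a := by funext p; simp
      rw [he]; exact hc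
  -- derivative of the inverse
  have hinvd : ∀ p : ℝ, HasDerivAt Hinv (σ (Hinv p)) p := by
    intro p
    have h1 : (1 / σ (Hinv p)) ≠ 0 := one_div_ne_zero (hne _)
    have h2 := HasDerivAt.of_local_left_inverse hHinvCont.continuousAt (hHd (Hinv p)) h1
      (Filter.Eventually.of_forall hright)
    simpa using h2
  -- differentiability facts
  have hσdiff : Differentiable ℝ σ := hσC2.differentiable two_ne_zero
  have hphiInf : ContDiff ℝ (⊤ : ℕ∞) φ := hφ.of_le (by simp)
  have hφdiff : Differentiable ℝ φ := hphiInf.differentiable (by simp)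
  have hφ' : ContDiff ℝ (⊤ : ℕ∞) (deriv φ) := (contDiff_infty_iff_deriv.mp hphiInf).2
  have hφ'diff : Differentiable ℝ (deriv φ) := hφ'.differentiable (by simp)
  have hφ'' : ContDiff ℝ (⊤ : ℕ∞) (deriv (deriv φ)) := (contDiff_infty_iff_deriv.mp hφ').2
  -- bounds
  obtain ⟨A, hA⟩ := hφsupp.deriv.exists_bound_of_continuous hφ'.continuous
  obtain ⟨B, hB⟩ := hφsupp.deriv.deriv.exists_bound_of_continuous hφ''.continuous
  obtain ⟨M0, hM0⟩ := hφsupp.exists_bound_of_continuousOn hσc.continuousOn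
  set M : ℝ := max M0 0 with hMdef
  have hM : ∀ z ∈ tsupport φ, |σ z| ≤ M := fun z hz =>
    le_trans (hM0 z hz) (le_max_left _ _)
  have hMnn : (0 : ℝ) ≤ M := le_max_right _ _
  have hA0 : (0 : ℝ) ≤ A := le_trans (norm_nonneg _) (hA 0)
  have hB0 : (0 : ℝ) ≤ B := le_trans (norm_nonneg _) (hB 0)
  have hL : ∀ z : ℝ, |deriv σ z| ≤ (L : ℝ) := fun z => norm_deriv_le_of_lipschitz hσ
  set C : ℝ := B * (M * M) + A * ((L : ℝ) * M) with hCdef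
  have hC0 : 0 ≤ C :=
    add_nonneg (mul_nonneg hB0 (mul_nonneg hMnn hMnn))
      (mul_nonneg hA0 (mul_nonneg L.coe_nonneg hMnn))
  -- uniform bound for the second derivative expression
  have hsupp' : tsupport (deriv φ) ⊆ tsupport φ :=
    closure_minimal support_deriv_subset (isClosed_tsupport φ)
  have hbound : ∀ u : ℝ,
      |deriv (deriv φ) u * σ u * σ u + deriv φ u * (deriv σ u * σ u)| ≤ C := by
    intro u
    by_cases hK : u ∈ tsupport φ
    · have h1 : |σ u| ≤ M := hM u hK
      have h2 : |deriv φ u| ≤ A := by simpa [Real.norm_eq_abs] using hA u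
      have h3 : |deriv (deriv φ) u| ≤ B := by simpa [Real.norm_eq_abs] using hB u
      calc |deriv (deriv φ) u * σ u * σ u + deriv φ u * (deriv σ u * σ u)|
          ≤ |deriv (deriv φ) u * σ u * σ u| + |deriv φ u * (deriv σ u * σ u)| :=
            abs_add_le _ _
        _ = |deriv (deriv φ) u| * (|σ u| * |σ u|)
              + |deriv φ u| * (|deriv σ u| * |σ u|) := by
            rw [abs_mul, abs_mul, abs_mul, abs_mul]; ring
        _ ≤ B * (M * M) + A * ((L : ℝ) * M) := by
            gcongr <;> first
              | exact h1 | exact h2 | exact h3 | exact hL u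
              | exact abs_nonneg _ | exact hMnn
        _ = C := hCdef.symm
    · have h1 : deriv φ u = 0 := by
        by_contra h
        exact hK (hsupp' (subset_closure (Function.mem_support.mpr h)))
      have h2 : deriv (deriv φ) u = 0 := by
        by_contra h
        exact hK (hsupp' (closure_minimal support_deriv_subset
          (isClosed_tsupport (deriv φ)) (subset_closure (Function.mem_support.mpr h))))
      rw [h1, h2]
      simpa using hC0
  refine ⟨C, hC0, ?_⟩
  intro x y _
  -- derivatives of t ↦ stuff (Hinv (H x + t))
  have hgd : ∀ t : ℝ, HasDerivAt (fun s => Hinv (H x + s)) (σ (Hinv (H x + t))) t := by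
    intro t
    have h1 : HasDerivAt (fun s : ℝ => H x + s) 1 t := (hasDerivAt_id t).const_add (H x)
    simpa [Function.comp_def] using (hinvd (H x + t)).comp t h1
  have hfd : ∀ t : ℝ, HasDerivAt (fun s => φ (Hinv (H x + s)))
      (deriv φ (Hinv (H x + t)) * σ (Hinv (H x + t))) t := by
    intro t
    simpa [Function.comp_def] using ((hφdiff (Hinv (H x + t))).hasDerivAt).comp t (hgd t)
  have hf1d : ∀ t : ℝ, HasDerivAt (fun s => deriv φ (Hinv (H x + s)) * σ (Hinv (H x + s)))
      (deriv (deriv φ) (Hinv (H x + t)) * σ (Hinv (H x + t)) * σ (Hinv (H x + t))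
        + deriv φ (Hinv (H x + t)) * (deriv σ (Hinv (H x + t)) * σ (Hinv (H x + t)))) t := by
    intro t
    have ha : HasDerivAt (fun s => deriv φ (Hinv (H x + s)))
        (deriv (deriv φ) (Hinv (H x + t)) * σ (Hinv (H x + t))) t := by
      simpa [Function.comp_def] using ((hφ'diff (Hinv (H x + t))).hasDerivAt).comp t (hgd t)
    have hb : HasDerivAt (fun s => σ (Hinv (H x + s)))
        (deriv σ (Hinv (H x + t)) * σ (Hinv (H x + t))) t := by
      simpa [Function.comp_def] using ((hσdiff (Hinv (H x + t))).hasDerivAt).comp t (hgd t)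
    exact ha.mul hb
  have main := taylor_bound_aux hfd hf1d (fun t => hbound (Hinv (H x + t))) y
  have e0 : Hinv (H x + 0) = x := by rw [add_zero, hleft x]
  rw [e0] at main
  rw [hG y x, mul_assoc]
  exact main
end

section
/- Let x_i < x_{i+1} be real numbers and let σ : ℝ → ℝ be Lipschitz continuous with σ(x_i) = 0, σ(x_{i+1}) = 0, and σ(t) ≠ 0 for all t ∈ (x_i, x_{i+1}). Fix a ∈ (x_i, x_{i+1}). Then H_i(x) = ∫_a^x dt/σ(t) is well defined and strictly monotone on (x_i, x_{i+1}) and is a bijection from the open interval (x_i, x_{i+1}) onto ℝ. -/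
open Filter MeasureTheory Set Topology intervalIntegral

/-!
By the intermediate value theorem σ has constant sign on `(xi, xj)`, so `H x = ∫ t in a..x, 1 / σ t`
is strictly monotone there, with derivative `1 / σ`. At a zero `x₀` the Lipschitz bound
`|σ t| ≤ L * |t - x₀|` gives `|1 / σ t| ≥ 1 / (L * |t - x₀|)`, whose integral diverges
logarithmically; so `H` tends to `±∞` at the two endpoints with opposite signs, and a continuous
function on an interval that does so is onto `ℝ`.
-/

theorem IsPreconnected.forall_pos_or_forall_neg {X α : Type*} [TopologicalSpace X] [LinearOrder α]
    [TopologicalSpace α] [OrderClosedTopology α] [Zero α] {s : Set X} (hs : IsPreconnected s)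
    {f : X → α} (hf : ContinuousOn f s) (hne : ∀ x ∈ s, f x ≠ 0) :
    (∀ x ∈ s, 0 < f x) ∨ ∀ x ∈ s, f x < 0 := by
  by_contra! h
  obtain ⟨⟨x, hx, hfx⟩, y, hy, hfy⟩ := h
  obtain ⟨z, hz, hfz⟩ := hs.intermediate_value hx hy hf ⟨hfx, hfy⟩
  exact hne z hz hfz

theorem LipschitzWith.le_mul_abs_sub_of_eq_zero {σ : ℝ → ℝ} {L : NNReal} (hσ : LipschitzWith L σ)
    {x₀ : ℝ} (h₀ : σ x₀ = 0) (t : ℝ) : σ t ≤ L * |t - x₀| := by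
  have h := hσ.dist_le_mul t x₀
  rw [Real.dist_eq, Real.dist_eq, h₀, sub_zero] at h
  exact (le_abs_self _).trans h

section

variable {f : ℝ → ℝ} {s : Set ℝ} {a b x : ℝ}

theorem ContinuousOn.hasDerivAt_integral (hf : ContinuousOn f s) (hs : IsOpen s) [s.OrdConnected]
    (ha : a ∈ s) (hx : x ∈ s) : HasDerivAt (fun x => ∫ t in a..x, f t) (f x) x :=
  integral_hasDerivAt_right ((hf.mono (OrdConnected.uIcc_subset ‹_› ha hx)).intervalIntegrable)
    (hf.stronglyMeasurableAtFilter hs x hx) (hf.continuousAt (hs.mem_nhds hx))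

theorem ContinuousOn.strictMonoOn_integral_of_pos (hf : ContinuousOn f s) (hs : IsOpen s)
    [s.OrdConnected] (ha : a ∈ s) (hpos : ∀ x ∈ s, 0 < f x) :
    StrictMonoOn (fun x => ∫ t in a..x, f t) s := by
  have hderiv : ∀ x ∈ s, HasDerivAt (fun x => ∫ t in a..x, f t) (f x) x :=
    fun x hx => hf.hasDerivAt_integral hs ha hx
  refine strictMonoOn_of_hasDerivWithinAt_pos (f' := f) (OrdConnected.convex ‹_›)
    (fun x hx => (hderiv x hx).continuousAt.continuousWithinAt) (fun x hx => ?_) ?_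
  · exact (hderiv x (interior_subset hx)).hasDerivWithinAt
  · simpa only [hs.interior_eq] using hpos

theorem ContinuousOn.strictMonoOn_integral_one_div (hf : ContinuousOn f s) (hs : IsOpen s)
    [s.OrdConnected] (ha : a ∈ s) (hpos : ∀ x ∈ s, 0 < f x) :
    StrictMonoOn (fun x => ∫ t in a..x, 1 / f t) s :=
  (continuousOn_const.div hf fun x hx => (hpos x hx).ne').strictMonoOn_integral_of_pos hs ha
    fun x hx => one_div_pos.2 (hpos x hx)

theorem integral_one_div_mul_sub_eq_log {L : ℝ} (ha : a < b) (hx : x < b) :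
    ∫ t in a..x, 1 / (L * (b - t)) = L⁻¹ * Real.log ((b - a) / (b - x)) := by
  simp_rw [one_div, mul_inv]
  rw [intervalIntegral.integral_const_mul, integral_comp_sub_left (fun u => u⁻¹),
    integral_inv_of_pos (sub_pos.2 hx) (sub_pos.2 ha)]

theorem tendsto_sub_nhdsLT_nhdsGT_zero : Tendsto (fun x => b - x) (𝓝[<] b) (𝓝[>] 0) := by
  have h : Tendsto (fun x => b - x) (𝓝 b) (𝓝 0) := by
    simpa using (continuous_const.sub continuous_id).tendsto (f := fun x => b - x) b
  exact tendsto_nhdsWithin_iff.2 ⟨h.mono_left nhdsWithin_le_nhds,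
    eventually_nhdsWithin_of_forall fun x hx => sub_pos.2 (mem_Iio.1 hx)⟩

theorem tendsto_integral_one_div_nhdsLT_atTop {L : ℝ} (hab : a < b) (hf : ContinuousOn f (Ico a b))
    (hpos : ∀ t ∈ Ico a b, 0 < f t) (hle : ∀ t ∈ Ico a b, f t ≤ L * (b - t)) :
    Tendsto (fun x => ∫ t in a..x, 1 / f t) (𝓝[<] b) atTop := by
  have ha : a ∈ Ico a b := left_mem_Ico.2 hab
  have hL : 0 < L := (pos_iff_pos_of_mul_pos ((hpos a ha).trans_le (hle a ha))).2 (sub_pos.2 hab)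
  have hlog : Tendsto (fun x => L⁻¹ * Real.log ((b - a) / (b - x))) (𝓝[<] b) atTop := by
    refine (Real.tendsto_log_atTop.comp ?_).const_mul_atTop (inv_pos.2 hL)
    simp_rw [div_eq_mul_inv]
    exact (tendsto_inv_nhdsGT_zero.comp tendsto_sub_nhdsLT_nhdsGT_zero).const_mul_atTop
      (sub_pos.2 hab)
  refine tendsto_atTop_mono' _ ?_ hlog
  filter_upwards [Ico_mem_nhdsLT hab] with x hx
  have hsub : Icc a x ⊆ Ico a b := Icc_subset_Ico_right hx.2
  rw [← integral_one_div_mul_sub_eq_log hab hx.2]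
  refine integral_mono_on hx.1 ?_ ?_ fun t ht => ?_
  · refine ContinuousOn.intervalIntegrable_of_Icc hx.1 (continuousOn_const.div (by fun_prop) ?_)
    exact fun t ht => (mul_pos hL (sub_pos.2 (hsub ht).2)).ne'
  · exact ContinuousOn.intervalIntegrable_of_Icc hx.1
      (continuousOn_const.div (hf.mono hsub) fun t ht => (hpos t (hsub ht)).ne')
  · exact one_div_le_one_div_of_le (hpos t (hsub ht)) (hle t (hsub ht))

theorem tendsto_integral_one_div_nhdsGT_atBot {L : ℝ} (hab : a < b) (hf : ContinuousOn f (Ioc a b))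
    (hpos : ∀ t ∈ Ioc a b, 0 < f t) (hle : ∀ t ∈ Ioc a b, f t ≤ L * (t - a)) :
    Tendsto (fun x => ∫ t in b..x, 1 / f t) (𝓝[>] a) atBot := by
  have hmaps : MapsTo (fun u => -u) (Ico (-b) (-a)) (Ioc a b) := fun u hu =>
    ⟨lt_neg_of_lt_neg hu.2, neg_le.1 hu.1⟩
  have hreflected := tendsto_integral_one_div_nhdsLT_atTop (f := fun u => f (-u)) (L := L)
    (neg_lt_neg hab) (hf.comp continuousOn_neg hmaps) (fun u hu => hpos _ (hmaps hu))
    (fun u hu => by convert hle _ (hmaps hu) using 2; ring)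
  have hintegral_eq : ∀ x, ∫ t in b..x, 1 / f t = -∫ u in -b..-x, 1 / f (-u) := fun x => by
    rw [integral_comp_neg (fun t => 1 / f t), neg_neg, neg_neg, integral_symm]
  simp_rw [hintegral_eq]
  exact tendsto_neg_atTop_atBot.comp
    (hreflected.comp (by simpa using tendsto_neg_nhdsGT_neg (a := -a)))

end

theorem LipschitzWith.surjOn_integral_one_div {σ : ℝ → ℝ} {L : NNReal} (hσ : LipschitzWith L σ)
    {xi xj a : ℝ} (hzi : σ xi = 0) (hzj : σ xj = 0) (hpos : ∀ t ∈ Ioo xi xj, 0 < σ t)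
    (ha : a ∈ Ioo xi xj) : SurjOn (fun x => ∫ t in a..x, 1 / σ t) (Ioo xi xj) univ := by
  have hij : xi < xj := ha.1.trans ha.2
  have hcont : ContinuousOn (fun t => 1 / σ t) (Ioo xi xj) :=
    continuousOn_const.div hσ.continuous.continuousOn fun t ht => (hpos t ht).ne'
  have hbot : Tendsto (fun x => ∫ t in a..x, 1 / σ t) (𝓝[>] xi) atBot := by
    have hsub : Ioc xi a ⊆ Ioo xi xj := Ioc_subset_Ioo_right ha.2
    refine tendsto_integral_one_div_nhdsGT_atBot (L := L) ha.1 hσ.continuous.continuousOn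
      (fun t ht => hpos t (hsub ht)) fun t ht => ?_
    simpa [abs_of_pos (sub_pos.2 ht.1)] using hσ.le_mul_abs_sub_of_eq_zero hzi t
  have htop : Tendsto (fun x => ∫ t in a..x, 1 / σ t) (𝓝[<] xj) atTop := by
    have hsub : Ico a xj ⊆ Ioo xi xj := Ico_subset_Ioo_left ha.1
    refine tendsto_integral_one_div_nhdsLT_atTop (L := L) ha.2 hσ.continuous.continuousOn
      (fun t ht => hpos t (hsub ht)) fun t ht => ?_
    simpa [abs_sub_comm t, abs_of_pos (sub_pos.2 ht.2)] using hσ.le_mul_abs_sub_of_eq_zero hzj t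
  exact ContinuousOn.surjOn_of_tendsto ⟨a, ha⟩
    (fun x hx => (hcont.hasDerivAt_integral isOpen_Ioo ha hx).continuousAt.continuousWithinAt)
    ((tendsto_comp_coe_Ioo_atBot hij).2 hbot) ((tendsto_comp_coe_Ioo_atTop hij).2 htop)

theorem fokker_planck_Hi_bijection_interval_general
    (σ : ℝ → ℝ) (L : NNReal) (hσ : LipschitzWith L σ)
    (xi xj : ℝ)
    (hzi : σ xi = 0) (hzj : σ xj = 0)
    (hne : ∀ t ∈ Ioo xi xj, σ t ≠ 0)
    (a : ℝ) (ha : a ∈ Ioo xi xj) :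
    (∀ x ∈ Ioo xi xj, IntervalIntegrable (fun t => 1 / σ t) volume a x) ∧
    (StrictMonoOn (fun x => ∫ t in a..x, 1 / σ t) (Ioo xi xj) ∨
     StrictAntiOn (fun x => ∫ t in a..x, 1 / σ t) (Ioo xi xj)) ∧
    BijOn (fun x => ∫ t in a..x, 1 / σ t) (Ioo xi xj) univ := by
  have hcont : ContinuousOn σ (Ioo xi xj) := hσ.continuous.continuousOn
  refine ⟨fun x hx => ((continuousOn_const.div hcont hne).mono
    (ordConnected_Ioo.uIcc_subset ha hx)).intervalIntegrable, ?_⟩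
  rcases isPreconnected_Ioo.forall_pos_or_forall_neg hcont hne with hpos | hneg
  · have hmono := hcont.strictMonoOn_integral_one_div isOpen_Ioo ha hpos
    exact ⟨.inl hmono, mapsTo_univ _ _, hmono.injOn, hσ.surjOn_integral_one_div hzi hzj hpos ha⟩
  · have hpos : ∀ t ∈ Ioo xi xj, 0 < (-σ) t := fun t ht => neg_pos.2 (hneg t ht)
    have hH : (fun x => ∫ t in a..x, 1 / σ t) = fun x => -∫ t in a..x, 1 / (-σ) t := by
      ext x
      simp only [Pi.neg_apply, one_div, inv_neg, intervalIntegral.integral_neg, neg_neg]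
    have hanti : StrictAntiOn (fun x => ∫ t in a..x, 1 / σ t) (Ioo xi xj) :=
      hH ▸ (hcont.neg.strictMonoOn_integral_one_div isOpen_Ioo ha hpos).neg
    refine ⟨.inr hanti, mapsTo_univ _ _, hanti.injOn, ?_⟩
    rw [hH]
    exact (surjOn_univ.2 neg_surjective).comp
      (hσ.neg.surjOn_integral_one_div (by simp [hzi]) (by simp [hzj]) hpos ha)

/-- Between two consecutive zeros x_i < x_{i+1} of a Lipschitz σ,
H_i(x) = ∫_a^x dt/σ(t) is well defined and strictly monotone on (x_i, x_{i+1})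
and is a bijection from (x_i, x_{i+1}) onto ℝ. -/
theorem fokker_planck_Hi_bijection_interval
    (σ : ℝ → ℝ) (L : NNReal) (hσ : LipschitzWith L σ)
    (xi xj : ℝ) (hij : xi < xj)
    (hzi : σ xi = 0) (hzj : σ xj = 0)
    (hne : ∀ t ∈ Ioo xi xj, σ t ≠ 0)
    (a : ℝ) (ha : a ∈ Ioo xi xj) :
    (∀ x ∈ Ioo xi xj, IntervalIntegrable (fun t => 1 / σ t) volume a x) ∧
    (StrictMonoOn (fun x => ∫ t in a..x, 1 / σ t) (Ioo xi xj) ∨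
     StrictAntiOn (fun x => ∫ t in a..x, 1 / σ t) (Ioo xi xj)) ∧
    BijOn (fun x => ∫ t in a..x, 1 / σ t) (Ioo xi xj) univ :=
  fokker_planck_Hi_bijection_interval_general σ L hσ xi xj hzi hzj hne a ha
end

section
/- Let x₁ ∈ ℝ and let σ : ℝ → ℝ be Lipschitz continuous with σ(x₁) = 0 and σ(t) ≠ 0 for all t < x₁. Fix a < x₁. Then H₀(x) = ∫_a^x dt/σ(t) is well defined and strictly monotone on (−∞, x₁) and is a bijection from (−∞, x₁) onto ℝ. -/
open MeasureTheory Set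

open intervalIntegral Real in
lemma fp_aux_pos
    (σ : ℝ → ℝ) (L : NNReal) (hσ : LipschitzWith L σ)
    (x₁ : ℝ) (hz : σ x₁ = 0)
    (hpos : ∀ t : ℝ, t < x₁ → 0 < σ t)
    (a : ℝ) (ha : a < x₁) :
    (∀ x ∈ Iio x₁, IntervalIntegrable (fun t => 1 / σ t) volume a x) ∧
    StrictMonoOn (fun x => ∫ t in a..x, 1 / σ t) (Iio x₁) ∧
    BijOn (fun x => ∫ t in a..x, 1 / σ t) (Iio x₁) univ := by
  have hc : Continuous σ := hσ.continuous
  have hL : (0:ℝ) < L := by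
    rcases eq_or_lt_of_le L.coe_nonneg with h | h
    · exfalso
      have hd := hσ.dist_le_mul a x₁
      rw [← h, zero_mul] at hd
      have : σ a = σ x₁ := by
        have := dist_nonneg (x := σ a) (y := σ x₁)
        have : dist (σ a) (σ x₁) = 0 := le_antisymm hd this
        exact dist_eq_zero.mp this
      exact absurd (this.trans hz) (hpos a ha).ne'
    · exact h
  -- integrability on any subinterval of (-∞, x₁)
  have hint : ∀ x y : ℝ, x < x₁ → y < x₁ →
      IntervalIntegrable (fun t => 1 / σ t) volume x y := by
    intro x y hx hy
    apply ContinuousOn.intervalIntegrable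
    apply ContinuousOn.div continuousOn_const hc.continuousOn
    intro t ht
    exact (hpos t (lt_of_le_of_lt ht.2 (max_lt hx hy))).ne'
  -- strict monotonicity
  have hmono : StrictMonoOn (fun x => ∫ t in a..x, 1 / σ t) (Iio x₁) := by
    intro x hx y hy hxy
    have key : (∫ t in a..y, 1 / σ t) - ∫ t in a..x, 1 / σ t
        = ∫ t in x..y, 1 / σ t :=
      integral_interval_sub_left (hint a y ha hy) (hint a x ha hx)
    have pos : 0 < ∫ t in x..y, 1 / σ t :=
      intervalIntegral_pos_of_pos_on (hint x y hx hy)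
        (fun t ht => one_div_pos.2 (hpos t (ht.2.trans hy))) hxy
    simp only
    linarith
  -- continuity of the primitive
  have hHc : ∀ x : ℝ, x < x₁ → ContinuousAt (fun x => ∫ t in a..x, 1 / σ t) x := by
    intro x hx
    have hmeas : StronglyMeasurableAtFilter (fun t => 1 / σ t) (nhds x) volume :=
      ((measurable_const.div hc.measurable).stronglyMeasurable).stronglyMeasurableAtFilter
    have hca : ContinuousAt (fun t => 1 / σ t) x :=
      ContinuousAt.div continuousAt_const hc.continuousAt (hpos x hx).ne'
    exact (intervalIntegral.integral_hasDerivAt_right (hint a x ha hx) hmeas hca).continuousAt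
  -- divergence to +∞ near x₁ : for every y there is x₂ ∈ (a, x₁) with y < H x₂
  have hup : ∀ y : ℝ, ∃ x₂ : ℝ, a < x₂ ∧ x₂ < x₁ ∧ y < ∫ t in a..x₂, 1 / σ t := by
    intro y
    have hc0 : 0 < x₁ - a := by linarith
    obtain ⟨δ, hδ0, hδc, hδe⟩ : ∃ δ : ℝ, 0 < δ ∧ δ < x₁ - a ∧
        δ < (x₁ - a) * Real.exp (-(L * y)) := by
      refine ⟨min ((x₁ - a) / 2) ((x₁ - a) * Real.exp (-(L * y)) / 2),
        lt_min (by positivity) (by positivity), ?_, ?_⟩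
      · have := min_le_left ((x₁ - a) / 2) ((x₁ - a) * Real.exp (-(L * y)) / 2)
        linarith
      · have h1 := min_le_right ((x₁ - a) / 2) ((x₁ - a) * Real.exp (-(L * y)) / 2)
        have h2 : 0 < (x₁ - a) * Real.exp (-(L * y)) := by positivity
        linarith
    refine ⟨x₁ - δ, by linarith, by linarith, ?_⟩
    have hx2 : x₁ - δ < x₁ := by linarith
    -- comparison function
    have hcomp : ∀ t ∈ Icc a (x₁ - δ), (L * (x₁ - t))⁻¹ ≤ 1 / σ t := by
      intro t ht
      have htx : t < x₁ := by have := ht.2; linarith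
      have hσt : 0 < σ t := hpos t htx
      have hub : σ t ≤ L * (x₁ - t) := by
        have hd := hσ.dist_le_mul t x₁
        rw [Real.dist_eq, Real.dist_eq, hz, sub_zero] at hd
        have h1 : σ t ≤ |σ t| := le_abs_self _
        have h2 : |t - x₁| = x₁ - t := by rw [abs_of_nonpos (by linarith)]; ring
        rw [h2] at hd; linarith
      rw [one_div]
      exact inv_anti₀ hσt hub
    have hgint : IntervalIntegrable (fun t => (L * (x₁ - t))⁻¹) volume a (x₁ - δ) := by
      apply ContinuousOn.intervalIntegrable
      apply ContinuousOn.inv₀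
      · fun_prop
      · intro t ht
        have : t < x₁ := lt_of_le_of_lt ht.2 (max_lt ha hx2)
        exact ne_of_gt (mul_pos hL (by linarith))
    have hmono' : (∫ t in a..(x₁ - δ), (L * (x₁ - t))⁻¹) ≤ ∫ t in a..(x₁ - δ), 1 / σ t :=
      integral_mono_on (by linarith) hgint (hint a (x₁ - δ) ha hx2) hcomp
    -- compute the comparison integral
    have hcalc : (∫ t in a..(x₁ - δ), (L * (x₁ - t))⁻¹)
        = (L : ℝ)⁻¹ * Real.log ((x₁ - a) / δ) := by
      have h1 : (fun t : ℝ => (L * (x₁ - t))⁻¹) = fun t => (L : ℝ)⁻¹ * (x₁ - t)⁻¹ := by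
        funext t; rw [mul_inv]
      rw [h1, intervalIntegral.integral_const_mul]
      congr 1
      have h2 : (∫ t in a..(x₁ - δ), (fun u : ℝ => u⁻¹) (x₁ - t))
          = ∫ u in (x₁ - (x₁ - δ))..(x₁ - a), (fun u : ℝ => u⁻¹) u :=
        intervalIntegral.integral_comp_sub_left (fun u : ℝ => u⁻¹) x₁
      simp only at h2
      rw [h2]
      have h3 : x₁ - (x₁ - δ) = δ := by ring
      rw [h3, integral_inv_of_pos hδ0 hc0]
    have hlog : (L : ℝ) * y < Real.log ((x₁ - a) / δ) := by
      have h1 : Real.exp (L * y) < (x₁ - a) / δ := by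
        rw [lt_div_iff₀ hδ0]
        calc Real.exp (L * y) * δ
            < Real.exp (L * y) * ((x₁ - a) * Real.exp (-(L * y))) := by
              exact mul_lt_mul_of_pos_left hδe (Real.exp_pos _)
          _ = x₁ - a := by rw [← mul_assoc, mul_comm (Real.exp _) (x₁ - a), mul_assoc,
              ← Real.exp_add]; simp
      calc (L : ℝ) * y = Real.log (Real.exp (L * y)) := (Real.log_exp _).symm
        _ < Real.log ((x₁ - a) / δ) := Real.log_lt_log (Real.exp_pos _) h1
    calc y = (L : ℝ)⁻¹ * ((L : ℝ) * y) := by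
          rw [← mul_assoc, inv_mul_cancel₀ hL.ne', one_mul]
      _ < (L : ℝ)⁻¹ * Real.log ((x₁ - a) / δ) := by
          exact mul_lt_mul_of_pos_left hlog (inv_pos.2 hL)
      _ = ∫ t in a..(x₁ - δ), (L * (x₁ - t))⁻¹ := hcalc.symm
      _ ≤ _ := hmono'
  -- divergence to -∞ : for every y there is x₀ < a with H x₀ < y
  have hdown : ∀ y : ℝ, ∃ x₀ : ℝ, x₀ < a ∧ (∫ t in a..x₀, 1 / σ t) < y := by
    intro y
    have hc0 : 0 < σ a := hpos a ha
    obtain ⟨s, hs_def⟩ : ∃ s : ℝ, s = σ a / L * Real.exp (-(L * y)) + 1 := ⟨_, rfl⟩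
    have hs0 : 0 < s := by rw [hs_def]; positivity
    refine ⟨a - s, by linarith, ?_⟩
    have hxa : a - s < a := by linarith
    have hx0 : a - s < x₁ := by linarith
    -- comparison on [a - s, a]
    have hcomp : ∀ t ∈ Icc (a - s) a, ((L : ℝ) * (a - t) + σ a)⁻¹ ≤ 1 / σ t := by
      intro t ht
      have htx : t < x₁ := lt_of_le_of_lt ht.2 ha
      have hσt : 0 < σ t := hpos t htx
      have hub : σ t ≤ (L : ℝ) * (a - t) + σ a := by
        have hd := hσ.dist_le_mul t a
        rw [Real.dist_eq, Real.dist_eq] at hd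
        have h1 : σ t - σ a ≤ |σ t - σ a| := le_abs_self _
        have h2 : |t - a| = a - t := by rw [abs_of_nonpos (by linarith [ht.2])]; ring
        rw [h2] at hd
        linarith
      rw [one_div]
      exact inv_anti₀ hσt hub
    have hgint : IntervalIntegrable (fun t => ((L : ℝ) * (a - t) + σ a)⁻¹) volume (a - s) a := by
      apply ContinuousOn.intervalIntegrable
      apply ContinuousOn.inv₀
      · fun_prop
      · intro t ht
        have h1 : t ≤ a := le_trans ht.2 (by simp [hxa.le])
        exact ne_of_gt (by nlinarith [mul_nonneg L.coe_nonneg (sub_nonneg.2 h1)])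
    have hmono' : (∫ t in (a - s)..a, ((L : ℝ) * (a - t) + σ a)⁻¹)
        ≤ ∫ t in (a - s)..a, 1 / σ t :=
      integral_mono_on (by linarith) hgint (hint (a - s) a hx0 ha) hcomp
    -- compute the comparison integral
    have hcalc : (∫ t in (a - s)..a, ((L : ℝ) * (a - t) + σ a)⁻¹)
        = (L : ℝ)⁻¹ * Real.log ((L * s + σ a) / σ a) := by
      have h2 : (∫ t in (a - s)..a, (fun u : ℝ => ((L : ℝ) * u + σ a)⁻¹) (a - t))
          = ∫ u in (a - a)..(a - (a - s)), (fun u : ℝ => ((L : ℝ) * u + σ a)⁻¹) u :=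
        intervalIntegral.integral_comp_sub_left (fun u : ℝ => ((L : ℝ) * u + σ a)⁻¹) a
      simp only at h2
      rw [h2]
      have h3 : a - a = (0:ℝ) := by ring
      have h4 : a - (a - s) = s := by ring
      rw [h3, h4]
      have h5 : (∫ u in (0:ℝ)..s, (fun v : ℝ => v⁻¹) ((L : ℝ) * u + σ a))
          = (L : ℝ)⁻¹ • ∫ v in ((L : ℝ) * 0 + σ a)..((L : ℝ) * s + σ a),
              (fun v : ℝ => v⁻¹) v :=
        intervalIntegral.integral_comp_mul_add (fun v : ℝ => v⁻¹) hL.ne' (σ a)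
      simp only at h5
      rw [h5, mul_zero, zero_add, integral_inv_of_pos hc0 (by positivity), smul_eq_mul]
    have hlog : -((L : ℝ) * y) < Real.log ((L * s + σ a) / σ a) := by
      have h1 : Real.exp (-(L * y)) < ((L : ℝ) * s + σ a) / σ a := by
        rw [lt_div_iff₀ hc0]
        have : (L : ℝ) * s = σ a * Real.exp (-(L * y)) + L := by
          rw [hs_def]; field_simp
        nlinarith [Real.exp_pos (-(L * y))]
      calc -((L : ℝ) * y) = Real.log (Real.exp (-(L * y))) := (Real.log_exp _).symm
        _ < _ := Real.log_lt_log (Real.exp_pos _) h1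
    have hsym : (∫ t in a..(a - s), 1 / σ t) = -∫ t in (a - s)..a, 1 / σ t :=
      intervalIntegral.integral_symm _ _
    have hfin : -y < (L : ℝ)⁻¹ * Real.log ((L * s + σ a) / σ a) := by
      have := mul_lt_mul_of_pos_left hlog (inv_pos.2 hL)
      calc -y = (L : ℝ)⁻¹ * (-((L : ℝ) * y)) := by
            rw [mul_neg, ← mul_assoc, inv_mul_cancel₀ hL.ne', one_mul]
        _ < _ := this
    rw [hsym]
    linarith [le_trans hcalc.ge hmono']
  refine ⟨fun x hx => hint a x ha hx, hmono, ?_⟩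
  refine ⟨fun x _ => trivial, hmono.injOn, ?_⟩
  intro y _
  obtain ⟨x₂, hax₂, hx₂, hyx₂⟩ := hup y
  obtain ⟨x₀, hx₀a, hx₀y⟩ := hdown y
  have hx₀₂ : x₀ < x₂ := lt_trans hx₀a hax₂
  have hcont : ContinuousOn (fun x => ∫ t in a..x, 1 / σ t) (Icc x₀ x₂) := by
    intro t ht
    exact (hHc t (lt_of_le_of_lt ht.2 hx₂)).continuousWithinAt
  have := intermediate_value_Icc hx₀₂.le hcont
  have hy : y ∈ Icc ((fun x => ∫ t in a..x, 1 / σ t) x₀) ((fun x => ∫ t in a..x, 1 / σ t) x₂) :=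
    ⟨le_of_lt hx₀y, le_of_lt hyx₂⟩
  obtain ⟨z, hz₁, hz₂⟩ := this hy
  exact ⟨z, lt_of_le_of_lt hz₁.2 hx₂, hz₂⟩

/-- If x₁ is the smallest zero of a Lipschitz σ (σ ≠ 0 on
(−∞, x₁)) and a < x₁, then H₀(x) = ∫_a^x dt/σ(t) is well defined and strictly
monotone on (−∞, x₁) and is a bijection from (−∞, x₁) onto ℝ. -/
theorem fokker_planck_H0_bijection_halfline
    (σ : ℝ → ℝ) (L : NNReal) (hσ : LipschitzWith L σ)
    (x₁ : ℝ) (hz : σ x₁ = 0)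
    (hne : ∀ t : ℝ, t < x₁ → σ t ≠ 0)
    (a : ℝ) (ha : a < x₁) :
    (∀ x ∈ Iio x₁, IntervalIntegrable (fun t => 1 / σ t) volume a x) ∧
    (StrictMonoOn (fun x => ∫ t in a..x, 1 / σ t) (Iio x₁) ∨
     StrictAntiOn (fun x => ∫ t in a..x, 1 / σ t) (Iio x₁)) ∧
    BijOn (fun x => ∫ t in a..x, 1 / σ t) (Iio x₁) univ := by
  have hc : Continuous σ := hσ.continuous
  -- sign dichotomy
  have hsign : (∀ t : ℝ, t < x₁ → 0 < σ t) ∨ (∀ t : ℝ, t < x₁ → σ t < 0) := by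
    rcases lt_or_gt_of_ne (hne a ha) with hneg | hposa
    · right
      intro t ht
      by_contra h
      push_neg at h
      have hpos' : 0 < σ t := lt_of_le_of_ne h (Ne.symm (hne t ht))
      have hsub := intermediate_value_uIcc (f := σ) (a := a) (b := t) hc.continuousOn
      have h0 : (0:ℝ) ∈ uIcc (σ a) (σ t) := by
        rw [mem_uIcc]; left; exact ⟨hneg.le, hpos'.le⟩
      obtain ⟨z, hzmem, hz0⟩ := hsub h0
      have : z < x₁ := lt_of_le_of_lt hzmem.2 (max_lt ha ht)
      exact hne z this hz0
    · left
      intro t ht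
      by_contra h
      push_neg at h
      have hneg' : σ t < 0 := lt_of_le_of_ne h (hne t ht)
      have hsub := intermediate_value_uIcc (f := σ) (a := a) (b := t) hc.continuousOn
      have h0 : (0:ℝ) ∈ uIcc (σ a) (σ t) := by
        rw [mem_uIcc]; right; exact ⟨hneg'.le, hposa.le⟩
      obtain ⟨z, hzmem, hz0⟩ := hsub h0
      have : z < x₁ := lt_of_le_of_lt hzmem.2 (max_lt ha ht)
      exact hne z this hz0
  rcases hsign with hpos | hneg
  · obtain ⟨h1, h2, h3⟩ := fp_aux_pos σ L hσ x₁ hz hpos a ha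
    exact ⟨h1, Or.inl h2, h3⟩
  · -- apply the positive case to -σ
    have hτ : LipschitzWith L (fun t => -σ t) := by
      intro x y
      simpa [edist_neg_neg] using hσ x y
    have hτz : (fun t => -σ t) x₁ = 0 := by simp [hz]
    have hτpos : ∀ t : ℝ, t < x₁ → 0 < (fun t => -σ t) t := by
      intro t ht; simpa using hneg t ht
    obtain ⟨h1, h2, h3⟩ := fp_aux_pos (fun t => -σ t) L hτ x₁ hτz hτpos a ha
    have hfun : (fun x => ∫ t in a..x, 1 / σ t)
        = fun x => -∫ t in a..x, 1 / (fun t => -σ t) t := by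
      funext x
      rw [← intervalIntegral.integral_neg]
      congr 1
      funext t
      simp [div_neg]
    refine ⟨?_, Or.inr ?_, ?_⟩
    · intro x hx
      have h := (h1 x hx).neg
      have heq : (fun t => 1 / σ t) = -fun t => 1 / (fun t => -σ t) t := by
        funext t; simp [div_neg]
      rw [heq]; exact h
    · rw [hfun]
      intro x hx y hy hxy
      exact neg_lt_neg (h2 hx hy hxy)
    · rw [hfun]
      have hnegbij : BijOn (fun x : ℝ => -x) univ univ :=
        neg_involutive.bijective.bijOn_univ
      exact hnegbij.comp h3
end

section
/- Let σ : ℝ → ℝ be real analytic and Lipschitz continuous with Lipschitz constant L, let x₀ ∈ ℝ with σ(x₀) = 0, and let F : ℝ × ℝ → ℝ satisfy ∂F/∂y(x, y) = σ(F(x, y)) and F(x, 0) = x for all x, y ∈ ℝ. Define h₁ = σ, h_{k+1} = σ·h_k′, and set Φ₀ = 1 and Φ_k = h_k′(x₀) for k ≥ 1. Then for every y ∈ ℝ the series Σ_{k≥0} Φ_k·y^k/k! converges, the map x ↦ F(x, y) is differentiable at x₀, and its derivative there equals Σ_{k≥0} Φ_k·y^k/k!, i.e., lim_{x → x₀} (F(x,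 y) − x₀)/(x − x₀) = Σ_{k≥0} Φ_k·y^k/k!. -/
/-!
Since `σ x₀ = 0`, the product rule gives `h_{k+1}'(x₀) = σ'(x₀) h_k'(x₀)`, so `Φ_k = σ'(x₀)^k` and
the series is `exp (σ'(x₀) y)`. The flow fixes `x₀` and, by Grönwall, `F x t` stays within
`|x - x₀| e^{L|t|}` of it. Grönwall again compares `F x t - x₀` with the solution
`e^{σ'(x₀) t} (x - x₀)` of the linearized equation: the two are driven apart only by
`σ u - σ'(x₀) (u - x₀) = o(u - x₀)`, so their difference at time `y` is `o(x - x₀)`.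
-/

open Real Set Filter Asymptotics

section Gronwall

variable {E : Type*} [NormedAddCommGroup E] [NormedSpace ℝ E]

theorem gronwallBound_zero_eq_mul (K ε t : ℝ) :
    gronwallBound 0 K ε t = ε * gronwallBound 0 K 1 t := by
  unfold gronwallBound
  split_ifs <;> ring

theorem gronwallBound_zero_nonneg {K ε t : ℝ} (hK : 0 ≤ K) (hε : 0 ≤ ε) (ht : 0 ≤ t) :
    0 ≤ gronwallBound 0 K ε t := by
  simpa only [gronwallBound_x0] using gronwallBound_mono le_rfl hε hK ht

theorem norm_le_gronwallBound_abs {f f' : ℝ → E} {δ K ε t : ℝ}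
    (hf : ∀ s, HasDerivAt f (f' s) s) (h0 : ‖f 0‖ ≤ δ)
    (bound : ∀ s, |s| ≤ |t| → ‖f' s‖ ≤ K * ‖f s‖ + ε) :
    ‖f t‖ ≤ gronwallBound δ K ε |t| := by
  wlog ht : 0 ≤ t generalizing f f' t
  · have hrev := this (f := fun s => f (-s)) (f' := fun s => -f' (-s)) (t := -t)
      (fun s => by simpa [Function.comp_def] using (hf (-s)).scomp s (hasDerivAt_neg s))
      (by simpa using h0)
      (fun s hs => by simpa using bound (-s) (by simpa using hs))
      (by linarith)
    simpa using hrev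
  rw [abs_of_nonneg ht] at bound ⊢
  simpa using norm_le_gronwallBound_of_norm_deriv_right_le (a := 0) (b := t)
    (fun s _ => (hf s).continuousAt.continuousWithinAt) (fun s _ => (hf s).hasDerivWithinAt)
    h0 (fun s hs => bound s (by rw [abs_of_nonneg hs.1]; exact hs.2.le))
    t ⟨ht, le_rfl⟩

end Gronwall

section AutonomousODE

variable {E : Type*} [NormedAddCommGroup E] [NormedSpace ℝ E] {v : E → E} {u : ℝ → E} {x₀ : E}

theorem norm_sub_le_mul_exp_of_lipschitzWith {K : NNReal} (hv : LipschitzWith K v)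
    (hx₀ : v x₀ = 0) (hu : ∀ t, HasDerivAt u (v (u t)) t) (t : ℝ) :
    ‖u t - x₀‖ ≤ ‖u 0 - x₀‖ * exp (K * |t|) := by
  have := norm_le_gronwallBound_abs (f := fun t => u t - x₀) (K := K) (ε := 0) (t := t)
    (fun s => (hu s).sub_const x₀) le_rfl
    (fun s _ => by simpa [hx₀, dist_eq_norm] using hv.dist_le_mul (u s) x₀)
  rwa [gronwallBound_ε0] at this

theorem norm_sub_exp_smul_le_gronwallBound {c η t : ℝ} (hu : ∀ s, HasDerivAt u (v (u s)) s)
    (hv : ∀ s, |s| ≤ |t| → ‖v (u s) - c • (u s - x₀)‖ ≤ η) :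
    ‖u t - x₀ - exp (c * t) • (u 0 - x₀)‖ ≤ gronwallBound 0 |c| η |t| := by
  have hlin (s : ℝ) :
      HasDerivAt (fun s => exp (c * s) • (u 0 - x₀)) (c • exp (c * s) • (u 0 - x₀)) s := by
    simpa [smul_smul, mul_comm] using ((hasDerivAt_mul_const c).exp).smul_const (u 0 - x₀)
  refine norm_le_gronwallBound_abs (fun s => ((hu s).sub_const x₀).sub (hlin s)) (by simp)
    fun s hs => ?_
  calc ‖v (u s) - c • exp (c * s) • (u 0 - x₀)‖
      = ‖c • (u s - x₀ - exp (c * s) • (u 0 - x₀)) + (v (u s) - c • (u s - x₀))‖ := by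
        congr 1; simp only [smul_sub]; abel
    _ ≤ |c| * ‖u s - x₀ - exp (c * s) • (u 0 - x₀)‖ + η := by
        grw [norm_add_le, norm_smul, Real.norm_eq_abs, hv s hs]

end AutonomousODE

section Coefficients

variable {𝕜 : Type*} [NontriviallyNormedField 𝕜] [CompleteSpace 𝕜] {σ : 𝕜 → 𝕜}
  {h : ℕ → 𝕜 → 𝕜} {s : Set 𝕜}

theorem analyticOnNhd_of_succ_eq_mul_deriv (hσ : AnalyticOnNhd 𝕜 σ s) (hh1 : h 1 = σ)
    (hhk : ∀ k, 1 ≤ k → h (k + 1) = fun x => σ x * deriv (h k) x) :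
    ∀ k, 1 ≤ k → AnalyticOnNhd 𝕜 (h k) s := by
  refine Nat.le_induction (hh1 ▸ hσ) fun k hk ih => ?_
  rw [hhk k hk]
  exact hσ.mul ih.deriv

theorem deriv_eq_pow_of_succ_eq_mul_deriv (hσ : AnalyticOnNhd 𝕜 σ s) (hh1 : h 1 = σ)
    (hhk : ∀ k, 1 ≤ k → h (k + 1) = fun x => σ x * deriv (h k) x) {x₀ : 𝕜} (hx₀ : x₀ ∈ s)
    (hz : σ x₀ = 0) : ∀ k, 1 ≤ k → deriv (h k) x₀ = deriv σ x₀ ^ k := by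
  refine Nat.le_induction (by rw [hh1, pow_one]) fun k hk ih => ?_
  have hd := (analyticOnNhd_of_succ_eq_mul_deriv hσ hh1 hhk k hk).deriv x₀ hx₀
  rw [hhk k hk, deriv_fun_mul (hσ x₀ hx₀).differentiableAt hd.differentiableAt, hz, ih,
    pow_succ]
  ring

end Coefficients

theorem hasDerivAt_flow_of_eq_zero {σ : ℝ → ℝ} {L : NNReal} {c x₀ : ℝ} {F : ℝ → ℝ → ℝ}
    (hσ : LipschitzWith L σ) (hc : HasDerivAt σ c x₀) (hz : σ x₀ = 0)
    (hF : ∀ x t, HasDerivAt (F x) (σ (F x t)) t) (hF0 : ∀ x, F x 0 = x) (y : ℝ) :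
    HasDerivAt (fun x => F x y) (exp (c * y)) x₀ := by
  have hflow (x t : ℝ) : |F x t - x₀| ≤ |x - x₀| * exp (L * |t|) := by
    simpa [hF0] using norm_sub_le_mul_exp_of_lipschitzWith hσ hz (hF x) t
  have hfix : F x₀ y = x₀ := by simpa [sub_eq_zero] using hflow x₀ y
  set A := exp (L * |y|)
  set G := gronwallBound 0 |c| 1 |y|
  have hnear (x s : ℝ) (hs : |s| ≤ |y|) : |F x s - x₀| ≤ |x - x₀| * A := by
    grw [hflow, hs]
  have hAG : 0 ≤ A * G := mul_nonneg (exp_pos _).le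
    (gronwallBound_zero_nonneg (abs_nonneg c) zero_le_one (abs_nonneg y))
  rw [hasDerivAt_iff_isLittleO, isLittleO_iff]
  intro ε hε
  set ε₁ := ε / (A * G + 1)
  have hε₁ : 0 < ε₁ := by positivity
  obtain ⟨δ, hδ, hlin⟩ :
      ∃ δ > 0, ∀ u, dist u x₀ < δ → |σ u - c * (u - x₀)| ≤ ε₁ * |u - x₀| := by
    have := (hasDerivAt_iff_isLittleO.mp hc).def hε₁
    rw [Metric.eventually_nhds_iff] at this
    simpa [hz, mul_comm c] using this
  filter_upwards [Metric.ball_mem_nhds x₀ (div_pos hδ (exp_pos (L * |y|)))] with x hx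
  rw [Metric.mem_ball, Real.dist_eq, lt_div_iff₀ (exp_pos _)] at hx
  have hrem (s : ℝ) (hs : |s| ≤ |y|) :
      ‖σ (F x s) - c • (F x s - x₀)‖ ≤ ε₁ * (|x - x₀| * A) := by
    have hclose : dist (F x s) x₀ < δ := (Real.dist_eq _ _).trans_lt ((hnear x s hs).trans_lt hx)
    grw [Real.norm_eq_abs, smul_eq_mul, hlin _ hclose, hnear x s hs]
  calc ‖F x y - F x₀ y - (x - x₀) • exp (c * y)‖
      = ‖F x y - x₀ - exp (c * y) • (F x 0 - x₀)‖ := by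
        rw [hfix, hF0, smul_eq_mul, smul_eq_mul, mul_comm]
    _ ≤ gronwallBound 0 |c| (ε₁ * (|x - x₀| * A)) |y| :=
        norm_sub_exp_smul_le_gronwallBound (hF x) hrem
    _ = ε₁ * (A * G) * ‖x - x₀‖ := by
        rw [gronwallBound_zero_eq_mul, Real.norm_eq_abs]; ring
    _ ≤ ε * ‖x - x₀‖ := by
        gcongr
        rw [div_mul_eq_mul_div, div_le_iff₀ (by positivity)]
        nlinarith

/-- At a zero x₀ of a real analytic Lipschitz σ with flow F, for
every y the series Σ_{k≥0} Φ_k·y^k/k! converges (Φ₀ = 1, Φ_k = h_k′(x₀),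
h₁ = σ, h_{k+1} = σ·h_k′), the map x ↦ F(x,y) is differentiable at x₀, and its
derivative there equals the sum of the series. -/
theorem fokker_planck_flow_deriv_at_zero
    (σ : ℝ → ℝ) (hσa : AnalyticOnNhd ℝ σ Set.univ)
    (L : NNReal) (hσ : LipschitzWith L σ)
    (x₀ : ℝ) (hz : σ x₀ = 0)
    (F : ℝ → ℝ → ℝ)
    (hF : ∀ x y : ℝ, HasDerivAt (fun y => F x y) (σ (F x y)) y)
    (hF0 : ∀ x : ℝ, F x 0 = x)
    (h : ℕ → ℝ → ℝ)
    (hh1 : h 1 = σ)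
    (hhk : ∀ k : ℕ, 1 ≤ k → h (k + 1) = fun x => σ x * deriv (h k) x)
    (Φ : ℕ → ℝ)
    (hΦ0 : Φ 0 = 1)
    (hΦk : ∀ k : ℕ, 1 ≤ k → Φ k = deriv (h k) x₀) :
    ∀ y : ℝ,
      Summable (fun k : ℕ => Φ k * y ^ k / (Nat.factorial k : ℝ)) ∧
      HasDerivAt (fun x => F x y)
        (∑' k : ℕ, Φ k * y ^ k / (Nat.factorial k : ℝ)) x₀ := by
  intro y
  set c := deriv σ x₀
  have hΦ (k : ℕ) : Φ k = c ^ k := by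
    rcases Nat.eq_zero_or_pos k with rfl | hk
    · rw [hΦ0, pow_zero]
    · rw [hΦk k hk, deriv_eq_pow_of_succ_eq_mul_deriv hσa hh1 hhk (mem_univ x₀) hz k hk]
  have hsum : HasSum (fun k : ℕ => Φ k * y ^ k / (Nat.factorial k : ℝ)) (exp (c * y)) := by
    simp_rw [hΦ, ← mul_pow, exp_eq_exp_ℝ]
    exact NormedSpace.expSeries_div_hasSum_exp (c * y)
  have hc : HasDerivAt σ c x₀ := (hσa x₀ (mem_univ x₀)).differentiableAt.hasDerivAt
  exact ⟨hsum.summable, hsum.tsum_eq ▸ hasDerivAt_flow_of_eq_zero hσ hc hz hF hF0 y⟩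
end

section
/- Let σ : ℝ → ℝ be real analytic and Lipschitz continuous, let x₀ ∈ ℝ with σ(x₀) = 0 and σ(x) ≠ 0 for all x ≠ x₀ in some punctured neighborhood of x₀, and let F : ℝ × ℝ → ℝ satisfy ∂F/∂y(x, y) = σ(F(x, y)) and F(x, 0) = x for all x, y ∈ ℝ. Define h₁ = σ, h_{k+1} = σ·h_k′, Φ₀ = 1, and Φ_k = h_k′(x₀) for k ≥ 1. Then for every y ∈ ℝ, lim_{x → x₀, x ≠ x₀} σ(F(x, y))/σ(x) = Σ_{k≥0} Φ_k·y^k/k!. -/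
/-!
Since `h_{k+1}' = σ' h_k' + σ h_k''` and `σ x₀ = 0`, we get `Φ k = σ'(x₀) ^ k`, so the series
is `exp (σ'(x₀) y)`. Along a trajectory, `u = σ ∘ F x` solves the linear equation
`u' = σ'(F x) u`, hence `σ (F x y) = σ x * exp (∫₀^y σ'(F x s) ds)`. By Gronwall the flow is
jointly continuous and `F x₀ ≡ x₀`, so the exponent tends to `σ'(x₀) y` as `x → x₀`.
-/

open Filter Set Real

open scoped ContDiff

section Flow

variable {E : Type*} [NormedAddCommGroup E] [NormedSpace ℝ E] {v : E → E} {K : NNReal}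
  {f g : ℝ → E}

theorem dist_le_mul_exp_of_hasDerivAt_of_lipschitzWith (hv : LipschitzWith K v)
    (hf : ∀ t, HasDerivAt f (v (f t)) t) (hg : ∀ t, HasDerivAt g (v (g t)) t) {t : ℝ}
    (ht : 0 ≤ t) : dist (f t) (g t) ≤ dist (f 0) (g 0) * exp (K * t) := by
  have hfc : Continuous f := continuous_iff_continuousAt.2 fun t => (hf t).continuousAt
  have hgc : Continuous g := continuous_iff_continuousAt.2 fun t => (hg t).continuousAt
  simpa using dist_le_of_trajectories_ODE (v := fun _ => v) (fun _ => hv) hfc.continuousOn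
    (fun t _ => (hf t).hasDerivWithinAt) hgc.continuousOn (fun t _ => (hg t).hasDerivWithinAt)
    le_rfl t ⟨ht, le_rfl⟩

theorem dist_le_mul_exp_abs_of_hasDerivAt_of_lipschitzWith (hv : LipschitzWith K v)
    (hf : ∀ t, HasDerivAt f (v (f t)) t) (hg : ∀ t, HasDerivAt g (v (g t)) t) (t : ℝ) :
    dist (f t) (g t) ≤ dist (f 0) (g 0) * exp (K * |t|) := by
  rcases le_total 0 t with ht | ht
  · simpa [abs_of_nonneg ht] using dist_le_mul_exp_of_hasDerivAt_of_lipschitzWith hv hf hg ht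
  · have hrev : ∀ {u : ℝ → E}, (∀ t, HasDerivAt u (v (u t)) t) →
        ∀ t, HasDerivAt (fun s => u (-s)) ((-v) (u (-t))) t := fun hu t => by
      simpa [Function.comp_def] using (hu (-t)).scomp t (hasDerivAt_neg t)
    simpa [abs_of_nonpos ht] using dist_le_mul_exp_of_hasDerivAt_of_lipschitzWith hv.neg
      (hrev hf) (hrev hg) (neg_nonneg.2 ht)

theorem eq_of_hasDerivAt_of_lipschitzWith_of_eq_zero (hv : LipschitzWith K v) {x₀ : E}
    (hz : v x₀ = 0) (hf : ∀ t, HasDerivAt f (v (f t)) t) (hf0 : f 0 = x₀) (t : ℝ) :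
    f t = x₀ :=
  dist_le_zero.1 <| by
    simpa [hf0] using dist_le_mul_exp_abs_of_hasDerivAt_of_lipschitzWith hv hf
      (fun _ => (hasDerivAt_const _ x₀).congr_deriv hz.symm) t

theorem continuous_uncurry_of_hasDerivAt_of_lipschitzWith (hv : LipschitzWith K v)
    {F : E → ℝ → E} (hF : ∀ x t, HasDerivAt (F x) (v (F x t)) t) (hF0 : ∀ x, F x 0 = x) :
    Continuous (Function.uncurry F) := by
  refine continuous_iff_continuousAt.2 fun ⟨x, t⟩ => ?_
  set T := |t| + 1
  have hlip : ∀ s ∈ Ioo (-T) T,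
      LipschitzOnWith ⟨exp (K * T), (exp_pos _).le⟩ (fun x => F x s) univ := by
    refine fun s hs => LipschitzOnWith.of_dist_le_mul fun x _ x' _ => ?_
    calc dist (F x s) (F x' s) ≤ dist x x' * exp (K * |s|) := by
          simpa [hF0] using
            dist_le_mul_exp_abs_of_hasDerivAt_of_lipschitzWith hv (hF x) (hF x') s
      _ ≤ exp (K * T) * dist x x' := by
          rw [mul_comm]
          gcongr
          exact (abs_lt.2 hs).le
  have hcont := continuousOn_prod_of_continuousOn_lipschitzOnWith (Function.uncurry F) _
    (fun x _ => continuous_iff_continuousAt.2 (fun s => (hF x s).continuousAt) |>.continuousOn)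
    hlip
  have ht : t ∈ Ioo (-T) T := abs_lt.1 (lt_add_one |t|)
  exact hcont.continuousAt (prod_mem_nhds univ_mem (Ioo_mem_nhds ht.1 ht.2))

end Flow

theorem eq_mul_exp_integral_of_hasDerivAt {u a : ℝ → ℝ} (ha : Continuous a)
    (hu : ∀ t, HasDerivAt u (a t * u t) t) (t : ℝ) :
    u t = u 0 * exp (∫ s in (0 : ℝ)..t, a s) := by
  set A : ℝ → ℝ := fun t => ∫ s in (0 : ℝ)..t, a s
  have hA : ∀ t, HasDerivAt A (a t) t := fun t => ha.integral_hasStrictDerivAt 0 t |>.hasDerivAt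
  have hconst : ∀ t, HasDerivAt (fun t => exp (-A t) * u t) 0 t := fun t => by
    refine (((hA t).neg.exp).mul (hu t)).congr_deriv ?_
    ring
  have := is_const_of_deriv_eq_zero (fun t => (hconst t).differentiableAt)
    (fun t => (hconst t).deriv) t 0
  simp only [A, intervalIntegral.integral_same, neg_zero, exp_zero, one_mul] at this
  rw [← this, mul_right_comm, ← exp_add, neg_add_cancel, exp_zero, one_mul]

theorem comp_flow_eq_mul_exp_integral {σ : ℝ → ℝ} (hσ : ContDiff ℝ 1 σ) {F : ℝ → ℝ → ℝ}
    (hF : ∀ x t, HasDerivAt (F x) (σ (F x t)) t) (hF0 : ∀ x, F x 0 = x) (x y : ℝ) :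
    σ (F x y) = σ x * exp (∫ s in (0 : ℝ)..y, deriv σ (F x s)) := by
  have hFx : Continuous (F x) := continuous_iff_continuousAt.2 fun t => (hF x t).continuousAt
  rw [eq_mul_exp_integral_of_hasDerivAt (u := fun t => σ (F x t)) (a := fun t => deriv σ (F x t))
    ((hσ.continuous_deriv le_rfl).comp hFx)
    (fun t => ((hσ.differentiable (by simp)) _).hasDerivAt.comp t (hF x t)) y, hF0]

section Coefficients

variable {𝕜 : Type*} [NontriviallyNormedField 𝕜] {σ : 𝕜 → 𝕜} {h : ℕ → 𝕜 → 𝕜}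

theorem contDiff_of_eq_mul_deriv (hσ : ContDiff 𝕜 ∞ σ) (hh1 : h 1 = σ)
    (hhk : ∀ k, 1 ≤ k → h (k + 1) = fun x => σ x * deriv (h k) x) :
    ∀ k, 1 ≤ k → ContDiff 𝕜 ∞ (h k) := by
  refine Nat.le_induction (hh1 ▸ hσ) fun k hk ih => ?_
  rw [hhk k hk]
  exact hσ.mul (contDiff_infty_iff_deriv.mp ih).2

theorem deriv_eq_pow_of_eq_mul_deriv (hσ : ContDiff 𝕜 ∞ σ) {x₀ : 𝕜} (hz : σ x₀ = 0)
    (hh1 : h 1 = σ) (hhk : ∀ k, 1 ≤ k → h (k + 1) = fun x => σ x * deriv (h k) x) :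
    ∀ k, 1 ≤ k → deriv (h k) x₀ = deriv σ x₀ ^ k := by
  have hsmooth := contDiff_of_eq_mul_deriv hσ hh1 hhk
  refine Nat.le_induction (by rw [hh1, pow_one]) fun k hk ih => ?_
  have hσd := (contDiff_infty_iff_deriv.mp hσ).1 x₀
  have hhd := (contDiff_infty_iff_deriv.mp (contDiff_infty_iff_deriv.mp (hsmooth k hk)).2).1 x₀
  rw [hhk k hk, deriv_fun_mul hσd hhd, hz, ih, pow_succ]
  ring

end Coefficients

theorem tsum_pow_mul_pow_div_factorial (c y : ℝ) :
    ∑' k : ℕ, c ^ k * y ^ k / (Nat.factorial k : ℝ) = exp (c * y) := by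
  rw [exp_eq_exp_ℝ, NormedSpace.exp_eq_tsum_div]
  simp_rw [mul_pow]

/-- At an isolated zero x₀ of a real analytic Lipschitz σ with
flow F, for every y the ratio σ(F(x,y))/σ(x) tends, as x → x₀ with x ≠ x₀, to
Σ_{k≥0} Φ_k·y^k/k! (Φ₀ = 1, Φ_k = h_k′(x₀), h₁ = σ, h_{k+1} = σ·h_k′). -/
theorem fokker_planck_flow_ratio_limit_at_zero
    (σ : ℝ → ℝ) (hσa : AnalyticOnNhd ℝ σ Set.univ)
    (L : NNReal) (hσ : LipschitzWith L σ)
    (x₀ : ℝ) (hz : σ x₀ = 0)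
    (hiso : ∃ ε > (0:ℝ), ∀ x : ℝ, x ≠ x₀ → |x - x₀| < ε → σ x ≠ 0)
    (F : ℝ → ℝ → ℝ)
    (hF : ∀ x y : ℝ, HasDerivAt (fun y => F x y) (σ (F x y)) y)
    (hF0 : ∀ x : ℝ, F x 0 = x)
    (h : ℕ → ℝ → ℝ)
    (hh1 : h 1 = σ)
    (hhk : ∀ k : ℕ, 1 ≤ k → h (k + 1) = fun x => σ x * deriv (h k) x)
    (Φ : ℕ → ℝ)
    (hΦ0 : Φ 0 = 1)
    (hΦk : ∀ k : ℕ, 1 ≤ k → Φ k = deriv (h k) x₀) :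
    ∀ y : ℝ,
      Tendsto (fun x => σ (F x y) / σ x) (nhdsWithin x₀ {x₀}ᶜ)
        (nhds (∑' k : ℕ, Φ k * y ^ k / (Nat.factorial k : ℝ))) := by
  intro y
  have hΦ : ∀ k, Φ k = deriv σ x₀ ^ k
    | 0 => hΦ0.trans (pow_zero _).symm
    | k + 1 => (hΦk _ k.succ_pos).trans
        (deriv_eq_pow_of_eq_mul_deriv hσa.contDiff hz hh1 hhk _ k.succ_pos)
  simp_rw [hΦ, tsum_pow_mul_pow_div_factorial]
  obtain ⟨ε, hε, hne⟩ := hiso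
  have hratio : ∀ᶠ x in nhdsWithin x₀ {x₀}ᶜ,
      exp (∫ s in (0 : ℝ)..y, deriv σ (F x s)) = σ (F x y) / σ x := by
    filter_upwards [mem_nhdsWithin_of_mem_nhds (Metric.ball_mem_nhds x₀ hε),
      self_mem_nhdsWithin] with x hxε hx
    rw [comp_flow_eq_mul_exp_integral hσa.contDiff hF hF0, mul_div_cancel_left₀ _ (hne x hx hxε)]
  have hint : Continuous fun x => ∫ s in (0 : ℝ)..y, deriv σ (F x s) :=
    intervalIntegral.continuous_parametric_intervalIntegral_of_continuous'
      (f := fun x s => deriv σ (F x s)) ((hσa.contDiff.continuous_deriv le_rfl).comp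
        (continuous_uncurry_of_hasDerivAt_of_lipschitzWith hσ hF hF0)) 0 y
  have hint₀ : ∫ s in (0 : ℝ)..y, deriv σ (F x₀ s) = deriv σ x₀ * y := by
    simp [eq_of_hasDerivAt_of_lipschitzWith_of_eq_zero hσ hz (hF x₀) (hF0 x₀), mul_comm]
  rw [← hint₀]
  exact ((continuous_exp.tendsto _).comp (hint.continuousAt.mono_left nhdsWithin_le_nhds)).congr'
    hratio
end
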